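/- For any two real symmetric m×m matrices A and B, one has 2‖[A,B]‖² ≤ (‖A‖² + ‖B‖²)², where ‖·‖ is the Frobenius norm. (This is the DDVV inequality in matrix form for codimension two.) -/

import Mathlib

open Matrix Finset

/-- Frobenius norm squared of a real matrix. -/
def frob2 {m : ℕ} (M : Matrix (Fin m) (Fin m) ℝ) : ℝ :=
  ∑ i, ∑ j, (M i j) ^ 2

/-!
Diagonalise `A = U diag(λ) Uᵀ` by an orthogonal `U`. Conjugation by `U` preserves the Frobenius
norm and commutators, so we may assume `A = diag(λ)`. Then `[A, B]ᵢⱼ = (λᵢ - λⱼ) Bᵢⱼ`, and for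
`i ≠ j` we have `(λᵢ - λⱼ)² ≤ 2 (λᵢ² + λⱼ²) ≤ 2 ‖A‖²`, whence `‖[A, B]‖² ≤ 2 ‖A‖² ‖B‖²`
(the Böttcher–Wenzel bound). Finally `4 ab ≤ (a + b)²`.
-/

open Unitary

variable {m : ℕ}

lemma frob2_eq_trace_mul_star (M : Matrix (Fin m) (Fin m) ℝ) : frob2 M = trace (M * star M) := by
  simp [frob2, trace, mul_apply, sq]

lemma trace_conjStarAlgAut (u : unitary (Matrix (Fin m) (Fin m) ℝ))
    (M : Matrix (Fin m) (Fin m) ℝ) : trace (conjStarAlgAut ℝ _ u M) = trace M := by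
  rw [conjStarAlgAut_apply, trace_mul_cycle, coe_star_mul_self, one_mul]

lemma frob2_conjStarAlgAut (u : unitary (Matrix (Fin m) (Fin m) ℝ))
    (M : Matrix (Fin m) (Fin m) ℝ) : frob2 (conjStarAlgAut ℝ _ u M) = frob2 M := by
  rw [frob2_eq_trace_mul_star, ← map_star, ← map_mul, trace_conjStarAlgAut,
    frob2_eq_trace_mul_star]

lemma frob2_diagonal (d : Fin m → ℝ) : frob2 (diagonal d) = ∑ i, d i ^ 2 := by
  refine sum_congr rfl fun i _ => ?_
  rw [sum_eq_single i (fun j _ hji => by simp [diagonal_apply_ne' _ hji]) (by simp),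
    diagonal_apply_eq]

lemma sq_sub_mul_le_of_ne (d : Fin m → ℝ) {i j : Fin m} (hij : i ≠ j) (b : ℝ) :
    ((d i - d j) * b) ^ 2 ≤ 2 * (∑ k, d k ^ 2) * b ^ 2 := by
  have hpair : d i ^ 2 + d j ^ 2 ≤ ∑ k, d k ^ 2 := by
    rw [← sum_pair (f := fun k => d k ^ 2) hij]
    exact sum_le_sum_of_subset_of_nonneg (subset_univ _) fun k _ _ => sq_nonneg _
  nlinarith [sq_nonneg (d i + d j), sq_nonneg b]

lemma frob2_diagonal_commutator_le (d : Fin m → ℝ) (B : Matrix (Fin m) (Fin m) ℝ) :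
    frob2 (diagonal d * B - B * diagonal d) ≤ 2 * frob2 (diagonal d) * frob2 B := by
  rw [frob2_diagonal, frob2, frob2, mul_sum]
  refine sum_le_sum fun i _ => ?_
  rw [mul_sum]
  refine sum_le_sum fun j _ => ?_
  have hentry : (diagonal d * B - B * diagonal d) i j = (d i - d j) * B i j := by
    simp only [Matrix.sub_apply, diagonal_mul, mul_diagonal]
    ring
  rw [hentry]
  rcases eq_or_ne i j with rfl | hij
  · rw [sub_self, zero_mul, zero_pow two_ne_zero]
    positivity
  · exact sq_sub_mul_le_of_ne d hij (B i j)

lemma frob2_commutator_le_of_isSymm {A : Matrix (Fin m) (Fin m) ℝ} (hA : A.IsSymm)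
    (B : Matrix (Fin m) (Fin m) ℝ) : frob2 (A * B - B * A) ≤ 2 * frob2 A * frob2 B := by
  have hAH : A.IsHermitian := by
    rwa [IsHermitian, conjTranspose_eq_transpose_of_trivial]
  set u := star hAH.eigenvectorUnitary
  have hdiag := hAH.conjStarAlgAut_star_eigenvectorUnitary
  rw [← frob2_conjStarAlgAut u, map_sub, map_mul, map_mul, hdiag,
    ← frob2_conjStarAlgAut u A, hdiag, ← frob2_conjStarAlgAut u B]
  exact frob2_diagonal_commutator_le _ _

theorem ddvv_codim_two_general {m : ℕ} (A B : Matrix (Fin m) (Fin m) ℝ)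
    (hA : A.IsSymm) :
    2 * frob2 (A * B - B * A) ≤ (frob2 A + frob2 B) ^ 2 := by
  nlinarith [frob2_commutator_le_of_isSymm hA B, sq_nonneg (frob2 A - frob2 B)]

/-- DDVV inequality in matrix form for codimension two:
for real symmetric matrices, 2‖[A,B]‖² ≤ (‖A‖² + ‖B‖²)². -/
theorem ddvv_codim_two {m : ℕ} (A B : Matrix (Fin m) (Fin m) ℝ)
    (hA : A.IsSymm) (hB : B.IsSymm) :
    2 * frob2 (A * B - B * A) ≤ (frob2 A + frob2 B) ^ 2 :=
  ddvv_codim_two_general A B hA
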